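/- arXiv:math/0703804 — 2 statements merged into one kernel-verified Lean document; each statement's English description precedes it below -/
import Mathlib

section
/- Let K be an algebraically closed field and let φ : P² ⇢ P² be a birational map of degree d given by (x₁:x₂:x₃) ⇢ (P₁:P₂:P₃) with P₁,P₂,P₃ homogeneous of degree d without common factor. If φ fixes pointwise an irreducible plane curve C_n of degree n (i.e., φ restricted to C_n is the identity) and φ is not the identity, then d ≥ n. -/
open MvPolynomial

lemma aux_hom {σ R : Type*} [CommSemiring R] {F G Q : MvPolynomial σ R} {n m : ℕ}
    (hF : F.IsHomogeneous n) (hQ : Q.IsHomogeneous m) (hmn : m ≤ n)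
    (h : F * G = Q) : ∃ c : R, Q = C c * F := by
  have hQ' : Q = homogeneousComponent m Q := by
    rw [homogeneousComponent_of_mem ((mem_homogeneousSubmodule _ _).2 hQ), if_pos rfl]
  have hGsum : (∑ k ∈ Finset.range (G.totalDegree + 1), homogeneousComponent k G) = G :=
    sum_homogeneousComponent G
  have key : Q = ∑ k ∈ Finset.range (G.totalDegree + 1),
      (if m = n + k then F * homogeneousComponent k G else 0) := by
    calc Q = homogeneousComponent m (F * G) := by rw [h]; exact hQ'
    _ = homogeneousComponent m (∑ k ∈ Finset.range (G.totalDegree + 1),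
          F * homogeneousComponent k G) := by rw [← Finset.mul_sum, hGsum]
    _ = ∑ k ∈ Finset.range (G.totalDegree + 1),
          homogeneousComponent m (F * homogeneousComponent k G) := map_sum _ _ _
    _ = _ := by
        refine Finset.sum_congr rfl fun k _ => ?_
        exact homogeneousComponent_of_mem ((mem_homogeneousSubmodule _ _).2
          (hF.mul (homogeneousComponent_isHomogeneous k G)))
  rcases lt_or_eq_of_le hmn with hlt | heq
  · refine ⟨0, ?_⟩
    rw [map_zero, zero_mul, key]
    exact Finset.sum_eq_zero fun k _ => if_neg (by omega)
  · refine ⟨coeff 0 G, ?_⟩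
    rw [key, Finset.sum_eq_single 0 (fun k _ hk => if_neg (by omega))
      (fun habs => absurd (Finset.mem_range.2 (Nat.succ_pos _)) habs)]
    rw [if_pos (by omega), homogeneousComponent_zero, mul_comm]

/-- A non-identical plane birational map of degree `d`, given by coprime homogeneous
polynomials `P₀, P₁, P₂` of degree `d`, fixing pointwise an irreducible curve of
degree `n`, satisfies `d ≥ n`. -/
theorem stmt4 {K : Type*} [Field K] [IsAlgClosed K] (n d : ℕ)
    (F : MvPolynomial (Fin 3) K) (hFirr : Irreducible F) (hFh : F.IsHomogeneous n)
    (P : Fin 3 → MvPolynomial (Fin 3) K) (hPh : ∀ i, (P i).IsHomogeneous d)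
    (hcop : ∀ q : MvPolynomial (Fin 3) K, (∀ i, q ∣ P i) → IsUnit q)
    (hfix : ∀ x : Fin 3 → K, x ≠ 0 → eval x F = 0 → (∃ i, eval x (P i) ≠ 0) →
      ∃ c : K, c ≠ 0 ∧ ∀ i, eval x (P i) = c * x i)
    (hnid : ¬ ∀ i j : Fin 3, P i * X j = P j * X i) :
    n ≤ d := by
  by_contra hcon
  push_neg at hcon  -- d < n
  have hF0 : F ≠ 0 := hFirr.ne_zero
  have hFprime : Prime F := hFirr.prime
  set Q : Fin 3 → Fin 3 → MvPolynomial (Fin 3) K :=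
    fun i j => P i * X j - P j * X i with hQdef
  have hQh : ∀ i j, (Q i j).IsHomogeneous (d + 1) := fun i j =>
    ((hPh i).mul (isHomogeneous_X _ _)).sub ((hPh j).mul (isHomogeneous_X _ _))
  -- Nullstellensatz: F divides each Q i j
  have hdvd : ∀ i j, F ∣ Q i j := by
    intro i j
    have hprimeI : (Ideal.span {F}).IsPrime := (Ideal.span_singleton_prime hF0).2 hFprime
    rw [← Ideal.mem_span_singleton, ← Ideal.IsPrime.radical hprimeI,
      ← vanishingIdeal_zeroLocus_eq_radical (K := K)]
    rw [mem_vanishingIdeal_iff]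
    intro x hx
    show eval x (Q i j) = 0
    have hxF : eval x F = 0 := hx F (Ideal.subset_span rfl)
    have hev : eval x (Q i j) = eval x (P i) * x j - eval x (P j) * x i := by
      simp [hQdef]
    by_cases hx0 : x = 0
    · subst hx0; rw [hev]; simp
    by_cases hP0 : ∃ k, eval x (P k) ≠ 0
    · obtain ⟨c, -, hc⟩ := hfix x hx0 hxF hP0
      rw [hev, hc i, hc j]; ring
    · push_neg at hP0
      rw [hev, hP0 i, hP0 j]; ring
  -- each Q i j is a constant multiple of F
  have hconst : ∀ i j, ∃ c : K, Q i j = C c * F := by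
    intro i j
    obtain ⟨G, hG⟩ := hdvd i j
    exact aux_hom hFh (hQh i j) (by omega) hG.symm
  obtain ⟨c01, h01⟩ := hconst 0 1
  obtain ⟨c12, h12⟩ := hconst 1 2
  obtain ⟨c20, h20⟩ := hconst 2 0
  -- syzygy
  have hsyz : X 2 * Q 0 1 + X 0 * Q 1 2 + X 1 * Q 2 0 = 0 := by
    simp only [hQdef]; ring
  rw [h01, h12, h20] at hsyz
  have hlin : C c01 * X 2 + C c12 * X 0 + C c20 * X 1 = (0 : MvPolynomial (Fin 3) K) := by
    have : (C c01 * X 2 + C c12 * X 0 + C c20 * X 1) * F = 0 := by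
      rw [← hsyz]; ring
    rcases mul_eq_zero.1 this with h | h
    · exact h
    · exact absurd h hF0
  have hc0 : ∀ k : Fin 3, c01 = 0 ∧ c12 = 0 ∧ c20 = 0 := by
    intro k
    refine ⟨?_, ?_, ?_⟩
    · have := congrArg (eval (fun m => if m = (2 : Fin 3) then (1 : K) else 0)) hlin
      simpa using this
    · have := congrArg (eval (fun m => if m = (0 : Fin 3) then (1 : K) else 0)) hlin
      simpa using this
    · have := congrArg (eval (fun m => if m = (1 : Fin 3) then (1 : K) else 0)) hlin
      simpa using this
  obtain ⟨hz01, hz12, hz20⟩ := hc0 0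
  have hQ01 : Q 0 1 = 0 := by rw [h01, hz01]; simp
  have hQ12 : Q 1 2 = 0 := by rw [h12, hz12]; simp
  have hQ20 : Q 2 0 = 0 := by rw [h20, hz20]; simp
  apply hnid
  intro i j
  have e01 : P 0 * X 1 = P 1 * X 0 := by
    have := hQ01; rw [hQdef] at this; linear_combination this
  have e12 : P 1 * X 2 = P 2 * X 1 := by
    have := hQ12; rw [hQdef] at this; linear_combination this
  have e20 : P 2 * X 0 = P 0 * X 2 := by
    have := hQ20; rw [hQdef] at this; linear_combination this
  fin_cases i <;> fin_cases j <;>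
    first
      | rfl
      | exact e01 | exact e01.symm
      | exact e12 | exact e12.symm
      | exact e20 | exact e20.symm
end

section
/- Let K be a field, F(x,y,z) = x²y + x·F₂(y,z) + F₃(y,z) an irreducible homogeneous cubic and G(x,y,z) = xy + G₂(y,z) a homogeneous quadric, where Fᵢ,Gᵢ are forms of degree i. Then the rational map φ : (x:y:z) ⇢ (xG − F : yG : zG) is birational. -/
open MvPolynomial

lemma aeval_scale6 {K : Type*} [CommRing K] {P : MvPolynomial (Fin 3) K} {d : ℕ}
    (hP : P.IsHomogeneous d) (h0 : ∀ m ∈ P.support, m 0 = 0)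
    (t c : MvPolynomial (Fin 3) K) :
    aeval ![t, c * X 1, c * X 2] P = c ^ d * P := by
  conv_lhs => rw [P.as_sum]
  conv_rhs => rw [P.as_sum]
  rw [map_sum, Finset.mul_sum]
  refine Finset.sum_congr rfl fun m hm => ?_
  rw [aeval_monomial, monomial_eq]
  have hm0 : m 0 = 0 := h0 m hm
  have hdeg : ∑ i ∈ m.support, m i = d := by
    have h1 := hP (mem_support_iff.mp hm)
    change (Finsupp.weight (fun _ => 1)) m = d at h1
    rw [← Finsupp.degree_eq_weight_one] at h1
    exact h1
  have hsupp : ∀ i ∈ m.support,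
      (![t, c * X 1, c * X 2] : Fin 3 → MvPolynomial (Fin 3) K) i ^ m i
        = c ^ m i * X i ^ m i := by
    intro i hi
    have hne : i ≠ 0 := fun h => (Finsupp.mem_support_iff.mp hi) (h ▸ hm0)
    fin_cases i
    · exact absurd rfl hne
    · simp [mul_pow]
    · simp [mul_pow]
  rw [Finsupp.prod, Finsupp.prod, Finset.prod_congr rfl hsupp, Finset.prod_mul_distrib,
    Finset.prod_pow_eq_pow_sum, hdeg, algebraMap_eq]
  ring

lemma psi_hom6 {K : Type*} [CommRing K] {P : MvPolynomial (Fin 3) K} {d : ℕ}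
    (hP : P.IsHomogeneous d) :
    aeval (fun i => Polynomial.C (X i) * Polynomial.X) P
      = Polynomial.C P * Polynomial.X ^ d := by
  conv_lhs => rw [P.as_sum]
  conv_rhs => rw [P.as_sum]
  rw [map_sum, map_sum, Finset.sum_mul]
  refine Finset.sum_congr rfl fun m hm => ?_
  rw [aeval_monomial, monomial_eq]
  have hdeg : ∑ i ∈ m.support, m i = d := by
    have h1 := hP (mem_support_iff.mp hm)
    change (Finsupp.weight (fun _ => 1)) m = d at h1
    rw [← Finsupp.degree_eq_weight_one] at h1
    exact h1
  have hsupp : ∀ i ∈ m.support,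
      (Polynomial.C (X i : MvPolynomial (Fin 3) K) * Polynomial.X) ^ m i
        = Polynomial.C (X i ^ m i) * Polynomial.X ^ m i := by
    intro i _
    rw [mul_pow, map_pow]
  rw [Finsupp.prod, Finset.prod_congr rfl hsupp, Finset.prod_mul_distrib,
    Finset.prod_pow_eq_pow_sum, hdeg, ← map_prod, map_mul, Finsupp.prod]
  have halg : (algebraMap K (Polynomial (MvPolynomial (Fin 3) K))) =
      (Polynomial.C).comp (MvPolynomial.C) := rfl
  rw [halg]
  simp only [RingHom.comp_apply]
  ring

/-- A homogeneous polynomial of degree `a` cannot divide a nonzero homogeneous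
polynomial of smaller degree `b`. -/
lemma hom_dvd6 {K : Type*} [CommRing K] {p r : MvPolynomial (Fin 3) K} {a b : ℕ}
    (hp : p.IsHomogeneous a) (hr : r.IsHomogeneous b) (hlt : b < a) (hdvd : p ∣ r) :
    r = 0 := by
  obtain ⟨q, hq⟩ := hdvd
  have e1 := psi_hom6 hr
  have e2 := psi_hom6 hp
  have h1 : (Polynomial.C p * aeval (fun i => Polynomial.C (X i) * Polynomial.X) q)
      * Polynomial.X ^ a = Polynomial.C r * Polynomial.X ^ b := by
    rw [← e1, hq, map_mul, e2]; ring
  have h2 := congrArg (fun P => Polynomial.coeff P b) h1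
  simp only [Polynomial.coeff_mul_X_pow'] at h2
  rw [if_neg (not_le.mpr hlt), if_pos le_rfl, Nat.sub_self, Polynomial.coeff_C_zero] at h2
  exact h2.symm

/-- The map `(x:y:z) ⇢ (xG − F : yG : zG)`, with `F = x²y + x·F₂(y,z) + F₃(y,z)`
irreducible and `G = xy + G₂(y,z)`, is birational: it admits a rational inverse. -/
theorem stmt6 {K : Type*} [Field K]
    (F₂ F₃ G₂ F G : MvPolynomial (Fin 3) K)
    (hF₂ : F₂.IsHomogeneous 2) (hF₃ : F₃.IsHomogeneous 3) (hG₂ : G₂.IsHomogeneous 2)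
    (hF₂x : ∀ m ∈ F₂.support, m 0 = 0) (hF₃x : ∀ m ∈ F₃.support, m 0 = 0)
    (hG₂x : ∀ m ∈ G₂.support, m 0 = 0)
    (hF : F = X 0 ^ 2 * X 1 + X 0 * F₂ + F₃)
    (hG : G = X 0 * X 1 + G₂)
    (hFirr : Irreducible F) :
    ∃ (e : ℕ) (Q : Fin 3 → MvPolynomial (Fin 3) K) (h : MvPolynomial (Fin 3) K),
      (∀ i, (Q i).IsHomogeneous e) ∧ h ≠ 0 ∧
      ∀ i, aeval (![X 0 * G - F, X 1 * G, X 2 * G]) (Q i) = h * X i := by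
  -- the key monomial `x·y`
  set μ : Fin 3 →₀ ℕ := Finsupp.single 0 1 + Finsupp.single 1 1 with hμ
  have hμ0 : μ 0 = 1 := by simp [hμ]
  have hcXY : coeff μ (X 0 * X 1 : MvPolynomial (Fin 3) K) = 1 := by
    have : (X 0 * X 1 : MvPolynomial (Fin 3) K) = monomial μ 1 := by
      rw [hμ, X, X, monomial_mul, mul_one]
    rw [this, coeff_monomial, if_pos rfl]
  have hczero : ∀ (P : MvPolynomial (Fin 3) K), (∀ m ∈ P.support, m 0 = 0) →
      coeff μ P = 0 := by
    intro P hP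
    by_contra hc
    have := hP μ (mem_support_iff.mpr hc)
    rw [hμ0] at this; exact one_ne_zero this
  -- nonzeroness of G
  have hGne : G ≠ 0 := by
    intro h0
    have : coeff μ G = 1 := by rw [hG, coeff_add, hcXY, hczero G₂ hG₂x, add_zero]
    rw [h0] at this; simp at this
  -- homogeneity facts
  have hX0 : (X 0 : MvPolynomial (Fin 3) K).IsHomogeneous 1 := isHomogeneous_X K 0
  have hX1 : (X 1 : MvPolynomial (Fin 3) K).IsHomogeneous 1 := isHomogeneous_X K 1
  have hX2 : (X 2 : MvPolynomial (Fin 3) K).IsHomogeneous 1 := isHomogeneous_X K 2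
  have hFhom : F.IsHomogeneous 3 := by
    rw [hF]
    exact (((hX0.pow 2).mul hX1).add (hX0.mul hF₂)).add hF₃
  have hGhom : G.IsHomogeneous 2 := by
    rw [hG]; exact (hX0.mul hX1).add hG₂
  -- the "determinant" D
  set D : MvPolynomial (Fin 3) K := G₂ * (G₂ - F₂) + X 1 * F₃ with hD
  set P₂ : MvPolynomial (Fin 3) K := X 0 * X 1 - G₂ + F₂ with hP₂
  have hP₂hom : P₂.IsHomogeneous 2 := ((hX0.mul hX1).sub hG₂).add hF₂
  have hP₂ne : P₂ ≠ 0 := by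
    intro h0
    have : coeff μ P₂ = 1 := by
      rw [hP₂, coeff_add, coeff_sub, hcXY, hczero G₂ hG₂x, hczero F₂ hF₂x,
        sub_zero, add_zero]
    rw [h0] at this; simp at this
  have hid : X 1 * F = G * P₂ + D := by rw [hF, hG, hP₂, hD]; ring
  have hDne : D ≠ 0 := by
    intro hD0
    rw [hD0, add_zero] at hid
    have hFprime : Prime F := UniqueFactorizationMonoid.irreducible_iff_prime.mp hFirr
    have hdvd : F ∣ G * P₂ := hid ▸ Dvd.intro_left (X 1) rfl
    rcases hFprime.2.2 _ _ hdvd with hd | hd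
    · exact hGne (hom_dvd6 hFhom hGhom (by norm_num) hd)
    · exact hP₂ne (hom_dvd6 hFhom hP₂hom (by norm_num) hd)
  refine ⟨3, ![X 0 * G₂ + F₃, X 1 * (G₂ - F₂ - X 0 * X 1), X 2 * (G₂ - F₂ - X 0 * X 1)],
    G ^ 2 * D, ?_, ?_, ?_⟩
  · intro i
    fin_cases i
    · exact (hX0.mul hG₂).add hF₃
    · exact hX1.mul ((hG₂.sub hF₂).sub (hX0.mul hX1))
    · exact hX2.mul ((hG₂.sub hF₂).sub (hX0.mul hX1))
  · exact mul_ne_zero (pow_ne_zero 2 hGne) hDne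
  · have hv : (![X 0 * G - F, X 1 * G, X 2 * G] : Fin 3 → MvPolynomial (Fin 3) K)
        = ![X 0 * G - F, G * X 1, G * X 2] := by
      funext i; fin_cases i <;> simp [mul_comm]
    have eF₂ : aeval ![X 0 * G - F, X 1 * G, X 2 * G] F₂ = G ^ 2 * F₂ := by
      rw [hv]; exact aeval_scale6 hF₂ hF₂x _ _
    have eF₃ : aeval ![X 0 * G - F, X 1 * G, X 2 * G] F₃ = G ^ 3 * F₃ := by
      rw [hv]; exact aeval_scale6 hF₃ hF₃x _ _
    have eG₂ : aeval ![X 0 * G - F, X 1 * G, X 2 * G] G₂ = G ^ 2 * G₂ := by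
      rw [hv]; exact aeval_scale6 hG₂ hG₂x _ _
    intro i
    fin_cases i
    · show aeval ![X 0 * G - F, X 1 * G, X 2 * G] (X 0 * G₂ + F₃) = G ^ 2 * D * X 0
      rw [map_add, map_mul, aeval_X, eG₂, eF₃]
      simp only [Matrix.cons_val_zero]
      rw [hD, hF, hG]; ring
    · show aeval ![X 0 * G - F, X 1 * G, X 2 * G] (X 1 * (G₂ - F₂ - X 0 * X 1))
        = G ^ 2 * D * X 1
      rw [map_mul, map_sub, map_sub, map_mul, aeval_X, aeval_X, eG₂, eF₂]
      simp only [Matrix.cons_val_zero, Matrix.cons_val_one, Matrix.head_cons]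
      rw [hD, hF, hG]; ring
    · show aeval ![X 0 * G - F, X 1 * G, X 2 * G] (X 2 * (G₂ - F₂ - X 0 * X 1))
        = G ^ 2 * D * X 2
      rw [map_mul, map_sub, map_sub, map_mul, aeval_X, aeval_X, aeval_X, eG₂, eF₂]
      simp only [Matrix.cons_val_zero, Matrix.cons_val_one, Matrix.head_cons,
        Matrix.cons_val_two, Matrix.tail_cons]
      rw [hD, hF, hG]; ring
end
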